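/- Let B(z) = z (z - a_1)(z - a_2)/((1 - conj(a_1) z)(1 - conj(a_2) z)) be a canonical Blaschke product of degree 3. If z_1 ≠ z_2 lie on the unit circle with B(z_1) = B(z_2) and z_1 + z_2 ≠ 0, then the intersection point z of the tangent lines to the unit circle at z_1 and z_2 satisfies conj(a_1) conj(a_2) z² − (|a_1 a_2|² − |a_1 + a_2|² + 1) z conj(z) + a_1 a_2 conj(z)² − 2(conj(a_1) + conj(a_2)) z − 2(a_1 + a_2) conj(z) + 4 = 0. -/

import Mathlib

/-!
Write `s = z₁ + z₂` and `p = z₁ z₂`. Clearing denominators in `B z₁ = B z₂` and dividing by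
`z₁ - z₂` leaves a relation `blaschkePairPoly a₁ a₂ (conj a₁) (conj a₂) s p = 0` between the
elementary symmetric functions of the pair. On the unit circle `conj zᵢ = zᵢ⁻¹`, so the tangent
intersection point is `z = 2p/s` with `conj z = 2/s`; substituting these into the curve gives
`4/s²` times that relation.
-/

open Complex
open ComplexConjugate

section Algebra

variable {K : Type*} [Field K]

def blaschkePairPoly (a₁ a₂ c₁ c₂ s p : K) : K :=
  s ^ 2 - p - (c₁ + c₂) * p * s + c₁ * c₂ * p ^ 2 - (a₁ + a₂) * s
    + (a₁ + a₂) * (c₁ + c₂) * p + a₁ * a₂ - a₁ * a₂ * c₁ * c₂ * p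

theorem blaschkePairPoly_eq_zero_of_eq {a₁ a₂ c₁ c₂ z₁ z₂ : K}
    (hd₁ : (1 - c₁ * z₁) * (1 - c₂ * z₁) ≠ 0) (hd₂ : (1 - c₁ * z₂) * (1 - c₂ * z₂) ≠ 0)
    (hne : z₁ ≠ z₂)
    (heq : z₁ * ((z₁ - a₁) * (z₁ - a₂)) / ((1 - c₁ * z₁) * (1 - c₂ * z₁)) =
      z₂ * ((z₂ - a₁) * (z₂ - a₂)) / ((1 - c₁ * z₂) * (1 - c₂ * z₂))) :
    blaschkePairPoly a₁ a₂ c₁ c₂ (z₁ + z₂) (z₁ * z₂) = 0 := by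
  rw [div_eq_div_iff hd₁ hd₂] at heq
  refine (mul_eq_zero.mp ?_).resolve_left (sub_ne_zero.mpr hne)
  unfold blaschkePairPoly
  linear_combination heq

theorem exteriorCurve_eq_blaschkePairPoly (a₁ a₂ c₁ c₂ s p : K) (hs : s ≠ 0) :
    c₁ * c₂ * (2 * p / s) ^ 2
      - (a₁ * a₂ * (c₁ * c₂) - (a₁ + a₂) * (c₁ + c₂) + 1) * (2 * p / s) * (2 / s)
      + a₁ * a₂ * (2 / s) ^ 2 - 2 * (c₁ + c₂) * (2 * p / s) - 2 * (a₁ + a₂) * (2 / s) + 4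
      = 4 / s ^ 2 * blaschkePairPoly a₁ a₂ c₁ c₂ s p := by
  unfold blaschkePairPoly
  field_simp
  ring

end Algebra

theorem one_sub_conj_mul_ne_zero {a w : ℂ} (ha : ‖a‖ < 1) (hw : ‖w‖ = 1) :
    1 - conj a * w ≠ 0 := by
  rw [sub_ne_zero]
  intro h
  have := congrArg norm h
  rw [norm_one, norm_mul, norm_conj, hw, mul_one] at this
  exact ha.ne this.symm

theorem conj_tangent_intersection {z₁ z₂ : ℂ} (hz₁ : ‖z₁‖ = 1) (hz₂ : ‖z₂‖ = 1) :
    conj (2 * z₁ * z₂ / (z₁ + z₂)) = 2 / (z₁ + z₂) := by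
  have h₁ : z₁ ≠ 0 := norm_ne_zero_iff.mp (by simp [hz₁])
  have h₂ : z₂ ≠ 0 := norm_ne_zero_iff.mp (by simp [hz₂])
  simp only [map_div₀, map_mul, map_add, map_ofNat, ← inv_eq_conj hz₁, ← inv_eq_conj hz₂]
  rw [inv_add_inv h₁ h₂]
  field_simp

theorem exterior_curve_deg3 (a₁ a₂ : ℂ)
    (ha₁ : ‖a₁‖ < 1) (ha₂ : ‖a₂‖ < 1)
    (B : ℂ → ℂ)
    (hB : ∀ z, B z = z * ((z - a₁) * (z - a₂)) /
      ((1 - (starRingEnd ℂ) a₁ * z) * (1 - (starRingEnd ℂ) a₂ * z)))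
    (z₁ z₂ : ℂ) (hz₁ : ‖z₁‖ = 1) (hz₂ : ‖z₂‖ = 1)
    (hne : z₁ ≠ z₂) (hsum : z₁ + z₂ ≠ 0) (heq : B z₁ = B z₂)
    (z : ℂ) (hz : z = 2 * z₁ * z₂ / (z₁ + z₂)) :
    (starRingEnd ℂ) a₁ * (starRingEnd ℂ) a₂ * z ^ 2
      - (((‖a₁ * a₂‖ : ℝ) ^ 2 - (‖a₁ + a₂‖ : ℝ) ^ 2 + 1) : ℂ)
          * z * (starRingEnd ℂ) z
      + a₁ * a₂ * ((starRingEnd ℂ) z) ^ 2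
      - 2 * ((starRingEnd ℂ) a₁ + (starRingEnd ℂ) a₂) * z
      - 2 * (a₁ + a₂) * (starRingEnd ℂ) z + 4 = 0 := by
  have hd : ∀ w, ‖w‖ = 1 → (1 - conj a₁ * w) * (1 - conj a₂ * w) ≠ 0 := fun w hw =>
    mul_ne_zero (one_sub_conj_mul_ne_zero ha₁ hw) (one_sub_conj_mul_ne_zero ha₂ hw)
  rw [hB, hB] at heq
  have hrel := blaschkePairPoly_eq_zero_of_eq (hd z₁ hz₁) (hd z₂ hz₂) hne heq
  have hzconj : conj z = 2 / (z₁ + z₂) := hz ▸ conj_tangent_intersection hz₁ hz₂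
  rw [hzconj, hz, ← mul_conj', ← mul_conj', map_mul, map_add,
    mul_assoc 2 z₁, exteriorCurve_eq_blaschkePairPoly _ _ _ _ _ _ hsum, hrel, mul_zero]
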